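/- The induced consensus seminorm is submultiplicative: for any n > 1, any p ∈ [1,∞], and any M₁, M₂ ∈ ℝ^{n×n} whose row sums are all equal, ⟨M₂M₁⟩_p ≤ ⟨M₂⟩_p · ⟨M₁⟩_p. -/

import Mathlib

/-!
Subtracting a constant vector does not change `vecSN`, and a matrix with equal row sums `r`
maps `x - c𝟏` to `M x - r c𝟏`; hence `vecSN (M x) ≤ ‖M‖ · vecSN x` for the `p`-operator norm
`‖M‖`. So the supremum defining `inducedSN p M` is finite, and by homogeneity
`vecSN (M x) ≤ inducedSN p M · vecSN x` for every `x`. Applying this twice to `M₂ (M₁ x)` bounds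
every element of the set defining `inducedSN p (M₂ * M₁)`.
-/

open Matrix Finset
open scoped ENNReal

noncomputable def matPNorm (p : ℝ≥0∞) [Fact (1 ≤ p)] {n m : ℕ}
    (M : Matrix (Fin n) (Fin m) ℝ) : ℝ :=
  ‖LinearMap.toContinuousLinearMap
    (Matrix.toLin (PiLp.basisFun p ℝ (Fin m)) (PiLp.basisFun p ℝ (Fin n)) M)‖

noncomputable def metricSN (p : ℝ≥0∞) [Fact (1 ≤ p)] {n m : ℕ}
    (M : Matrix (Fin n) (Fin m) ℝ) : ℝ :=
  ⨅ c : Fin m → ℝ, matPNorm p (M - Matrix.of fun _ j => c j)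

noncomputable def vecSN (p : ℝ≥0∞) [Fact (1 ≤ p)] {m : ℕ} (x : Fin m → ℝ) : ℝ :=
  ⨅ c : ℝ, ‖(WithLp.equiv p (Fin m → ℝ)).symm (x - fun _ => c)‖

noncomputable def inducedSN (p : ℝ≥0∞) [Fact (1 ≤ p)] {n m : ℕ}
    (M : Matrix (Fin n) (Fin m) ℝ) : ℝ :=
  sSup {r | ∃ x : Fin m → ℝ, vecSN p x = 1 ∧ r = vecSN p (M.mulVec x)}

noncomputable def coeErg {n : ℕ} (M : Matrix (Fin n) (Fin n) ℝ) : ℝ :=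
  (1 / 2) * ⨆ i : Fin n, ⨆ j : Fin n, ∑ k, |M i k - M j k|

def IsStochastic {n : ℕ} (S : Matrix (Fin n) (Fin n) ℝ) : Prop :=
  (∀ i j, 0 ≤ S i j) ∧ ∀ i, ∑ j, S i j = 1

def IsScrambling {n : ℕ} (S : Matrix (Fin n) (Fin n) ℝ) : Prop :=
  IsStochastic S ∧ ∀ i j, ∃ k, 0 < S i k ∧ 0 < S j k

def EqRowSum (n m : ℕ) : Submodule ℝ (Matrix (Fin n) (Fin m) ℝ) where
  carrier := {M | ∀ i i', ∑ j, M i j = ∑ j, M i' j}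
  add_mem' := by
    intro A B hA hB i i'
    simp only [Matrix.add_apply, Finset.sum_add_distrib, hA i i', hB i i']
  zero_mem' := by intro i i'; simp
  smul_mem' := by
    intro c A hA i i'
    simp only [Matrix.smul_apply, smul_eq_mul, ← Finset.mul_sum, hA i i']

noncomputable def prodSeq {n : ℕ} (M : ℕ → Matrix (Fin n) (Fin n) ℝ) :
    ℕ → Matrix (Fin n) (Fin n) ℝ
  | 0 => 1
  | (i + 1) => M i * prodSeq M i

open WithLp

section

variable {p : ℝ≥0∞} [Fact (1 ≤ p)] {k m n : ℕ}

lemma matPNorm_nonneg (M : Matrix (Fin n) (Fin m) ℝ) : 0 ≤ matPNorm p M :=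
  norm_nonneg _

lemma norm_toLp_mulVec_le (M : Matrix (Fin n) (Fin m) ℝ) (x : Fin m → ℝ) :
    ‖toLp p (M *ᵥ x)‖ ≤ matPNorm p M * ‖toLp p x‖ :=
  (M.toLpLin p p).toContinuousLinearMap.le_opNorm (toLp p x)

lemma vecSN_nonneg (x : Fin m → ℝ) : 0 ≤ vecSN p x :=
  Real.iInf_nonneg fun _ => norm_nonneg _

lemma vecSN_le_norm_sub_const (x : Fin m → ℝ) (c : ℝ) :
    vecSN p x ≤ ‖toLp p (x - fun _ => c)‖ :=
  ciInf_le ⟨0, Set.forall_mem_range.2 fun _ => norm_nonneg _⟩ c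

lemma vecSN_le_norm (x : Fin m → ℝ) : vecSN p x ≤ ‖toLp p x‖ := by
  simpa only [← Pi.zero_def, sub_zero] using vecSN_le_norm_sub_const (p := p) x 0

lemma vecSN_sub_const (x : Fin m → ℝ) (d : ℝ) : vecSN p (x - fun _ => d) = vecSN p x := by
  unfold vecSN
  refine (Equiv.addRight d).iInf_congr fun c => ?_
  congr 2
  ext
  simp only [Pi.sub_apply, Equiv.coe_addRight]
  ring

lemma vecSN_smul (a : ℝ) (x : Fin m → ℝ) : vecSN p (a • x) = |a| * vecSN p x := by
  rcases eq_or_ne a 0 with rfl | ha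
  · simp only [zero_smul, abs_zero, zero_mul]
    exact (vecSN_le_norm (0 : Fin m → ℝ)).trans_eq (by simp) |>.antisymm (vecSN_nonneg _)
  · unfold vecSN
    rw [Real.mul_iInf_of_nonneg (abs_nonneg a)]
    refine ((Equiv.mulLeft₀ a ha).iInf_congr fun c => ?_).symm
    rw [← Real.norm_eq_abs, ← norm_smul, ← toLp_smul]
    congr 2
    ext
    simp [mul_sub]

lemma exists_rowSum_eq {M : Matrix (Fin n) (Fin m) ℝ} (hM : M ∈ EqRowSum n m) :
    ∃ r, ∀ i, ∑ j, M i j = r := by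
  rcases isEmpty_or_nonempty (Fin n) with _ | ⟨⟨i₀⟩⟩
  · exact ⟨0, isEmptyElim⟩
  · exact ⟨_, fun i => hM i i₀⟩

lemma mulVec_sub_const {M : Matrix (Fin n) (Fin m) ℝ} {r : ℝ} (hr : ∀ i, ∑ j, M i j = r)
    (x : Fin m → ℝ) (c : ℝ) : M *ᵥ (x - fun _ => c) = M *ᵥ x - fun _ => r * c := by
  ext i
  simp [mulVec, dotProduct, mul_sub, sum_sub_distrib, ← sum_mul, hr]

lemma vecSN_mulVec_le_matPNorm_mul {M : Matrix (Fin n) (Fin m) ℝ} (hM : M ∈ EqRowSum n m)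
    (x : Fin m → ℝ) : vecSN p (M *ᵥ x) ≤ matPNorm p M * vecSN p x := by
  obtain ⟨r, hr⟩ := exists_rowSum_eq hM
  rw [vecSN.eq_1 p x, Real.mul_iInf_of_nonneg (matPNorm_nonneg M)]
  refine le_ciInf fun c => ?_
  calc vecSN p (M *ᵥ x) = vecSN p (M *ᵥ (x - fun _ => c)) := by
        rw [mulVec_sub_const hr, vecSN_sub_const]
    _ ≤ ‖toLp p (M *ᵥ (x - fun _ => c))‖ := vecSN_le_norm _
    _ ≤ matPNorm p M * ‖toLp p (x - fun _ => c)‖ := norm_toLp_mulVec_le M _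

lemma bddAbove_vecSN_mulVec {M : Matrix (Fin n) (Fin m) ℝ} (hM : M ∈ EqRowSum n m) :
    BddAbove {r | ∃ x : Fin m → ℝ, vecSN p x = 1 ∧ r = vecSN p (M *ᵥ x)} :=
  ⟨matPNorm p M, by
    rintro _ ⟨x, hx, rfl⟩
    simpa [hx] using vecSN_mulVec_le_matPNorm_mul (p := p) hM x⟩

lemma inducedSN_nonneg (M : Matrix (Fin n) (Fin m) ℝ) : 0 ≤ inducedSN p M :=
  Real.sSup_nonneg <| by
    rintro _ ⟨x, -, rfl⟩
    exact vecSN_nonneg _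

lemma vecSN_mulVec_le_inducedSN_mul {M : Matrix (Fin n) (Fin m) ℝ} (hM : M ∈ EqRowSum n m)
    (x : Fin m → ℝ) : vecSN p (M *ᵥ x) ≤ inducedSN p M * vecSN p x := by
  rcases (vecSN_nonneg (p := p) x).eq_or_lt with hx | hx
  · simpa [← hx] using vecSN_mulVec_le_matPNorm_mul (p := p) hM x
  · have hunit : vecSN p ((vecSN p x)⁻¹ • x) = 1 := by
      rw [vecSN_smul, abs_inv, abs_of_pos hx, inv_mul_cancel₀ hx.ne']
    have hle : vecSN p (M *ᵥ ((vecSN p x)⁻¹ • x)) ≤ inducedSN p M :=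
      le_csSup (bddAbove_vecSN_mulVec hM) ⟨_, hunit, rfl⟩
    rw [mulVec_smul, vecSN_smul, abs_inv, abs_of_pos hx, inv_mul_le_iff₀ hx] at hle
    rwa [mul_comm]

lemma inducedSN_mul_le {M₂ : Matrix (Fin n) (Fin m) ℝ} {M₁ : Matrix (Fin m) (Fin k) ℝ}
    (h₂ : M₂ ∈ EqRowSum n m) (h₁ : M₁ ∈ EqRowSum m k) :
    inducedSN p (M₂ * M₁) ≤ inducedSN p M₂ * inducedSN p M₁ := by
  refine Real.sSup_le ?_ (mul_nonneg (inducedSN_nonneg _) (inducedSN_nonneg _))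
  rintro _ ⟨x, hx, rfl⟩
  calc vecSN p ((M₂ * M₁) *ᵥ x) = vecSN p (M₂ *ᵥ (M₁ *ᵥ x)) := by rw [mulVec_mulVec]
    _ ≤ inducedSN p M₂ * vecSN p (M₁ *ᵥ x) := vecSN_mulVec_le_inducedSN_mul h₂ _
    _ ≤ inducedSN p M₂ * (inducedSN p M₁ * vecSN p x) := by
        gcongr
        exacts [inducedSN_nonneg _, vecSN_mulVec_le_inducedSN_mul h₁ x]
    _ = inducedSN p M₂ * inducedSN p M₁ := by rw [hx, mul_one]

end

theorem inducedSN_submultiplicative_general (n : ℕ) (p : ℝ≥0∞) [Fact (1 ≤ p)]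
    (M₁ M₂ : Matrix (Fin n) (Fin n) ℝ)
    (h₁ : ∀ i i', ∑ j, M₁ i j = ∑ j, M₁ i' j)
    (h₂ : ∀ i i', ∑ j, M₂ i j = ∑ j, M₂ i' j) :
    inducedSN p (M₂ * M₁) ≤ inducedSN p M₂ * inducedSN p M₁ :=
  inducedSN_mul_le h₂ h₁

/-- The induced consensus seminorm is submultiplicative: for any n > 1,
any p ∈ [1,∞], and any M₁, M₂ ∈ ℝ^{n×n} whose row sums are all equal,
⟨M₂M₁⟩_p ≤ ⟨M₂⟩_p · ⟨M₁⟩_p. -/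
theorem inducedSN_submultiplicative (n : ℕ) (hn : 1 < n) (p : ℝ≥0∞) [Fact (1 ≤ p)]
    (M₁ M₂ : Matrix (Fin n) (Fin n) ℝ)
    (h₁ : ∀ i i', ∑ j, M₁ i j = ∑ j, M₁ i' j)
    (h₂ : ∀ i i', ∑ j, M₂ i j = ∑ j, M₂ i' j) :
    inducedSN p (M₂ * M₁) ≤ inducedSN p M₂ * inducedSN p M₁ :=
  inducedSN_submultiplicative_general n p M₁ M₂ h₁ h₂
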